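/- arXiv:2111.13613 — 5 statements merged into one kernel-verified Lean document; each statement's English description precedes it below -/
import Mathlib

section
/- Let μ be a probability measure on X × {0,1} where (X,d) is a separable metric space, and let ε > 0. Define the adversarial risk R̃_ε(A) := E_{(x,y)∼μ}[sup_{x̃ ∈ B_ε(x)} |1_A(x̃) − y|] for Borel sets A. Then R̃_ε is submodular: R̃_ε(A ∪ B) + R̃_ε(A ∩ B) ≤ R̃_ε(A) + R̃_ε(B) for all Borel sets A, B. -/
/-!
The supremum in `advRisk` is `1` if the ball `B_ε(x)` meets the set of points that `A`
misclassifies with respect to the label `y`, and `0` otherwise. Hence `R̃_ε(A) = μ(E(A))`, where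
`E(A)` is the event that some `ε`-perturbation of `x` is misclassified. Under label `0`,
`E(A ∪ B) = E(A) ∪ E(B)` and `E(A ∩ B) ⊆ E(A) ∩ E(B)`; under label `1` the misclassified sets are
complements, so by De Morgan the roles of `A ∪ B` and `A ∩ B` are swapped. Either way
`E(A ∪ B) ∪ E(A ∩ B) = E(A) ∪ E(B)` and `E(A ∪ B) ∩ E(A ∩ B) ⊆ E(A) ∩ E(B)`, and submodularity
follows from `μ(s ∪ t) + μ(s ∩ t) = μ(s) + μ(t)`.
-/

open Set Metric MeasureTheory

/-- The adversarial risk `R̃_ε(A) = E_{(x,y)∼μ}[ sup_{xt ∈ B_ε(x)} |1_A(xt) − y| ]`,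
where labels `y ∈ {0,1}` are encoded by `Bool`. -/
noncomputable def advRisk {X : Type*} [MetricSpace X] [MeasurableSpace X]
    (μ : Measure (X × Bool)) (ε : ℝ) (A : Set X) : ℝ :=
  ∫ p, sSup ((fun xt => |A.indicator (fun _ => (1 : ℝ)) xt - (if p.2 then 1 else 0)|) ''
      ball p.1 ε) ∂μ

theorem MeasureTheory.measureReal_add_le_of_union_subset_of_inter_subset {α : Type*}
    [MeasurableSpace α] {μ : Measure α} [IsFiniteMeasure μ] {s t s' t' : Set α}
    (ht : MeasurableSet t) (ht' : MeasurableSet t') (hunion : s ∪ t ⊆ s' ∪ t')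
    (hinter : s ∩ t ⊆ s' ∩ t') : μ.real s + μ.real t ≤ μ.real s' + μ.real t' := by
  rw [← measureReal_union_add_inter ht, ← measureReal_union_add_inter ht']
  exact add_le_add (measureReal_mono hunion) (measureReal_mono hinter)

namespace Set

variable {α : Type*}

open Classical in
theorem sSup_image_indicator_one (S T : Set α) :
    sSup (S.indicator (fun _ => (1 : ℝ)) '' T) = if (T ∩ S).Nonempty then 1 else 0 := by
  split_ifs with h
  · obtain ⟨x, hxT, hxS⟩ := h
    refine IsGreatest.csSup_eq ⟨⟨x, hxT, indicator_of_mem hxS _⟩, ?_⟩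
    rintro _ ⟨y, -, rfl⟩
    exact indicator_le_self' (fun _ _ => zero_le_one) y
  · have hzero : ∀ r ∈ S.indicator (fun _ => (1 : ℝ)) '' T, r = 0 := by
      rintro _ ⟨y, hyT, rfl⟩
      exact indicator_of_notMem (fun hyS => h ⟨y, hyT, hyS⟩) _
    -- `Real.sSup_nonpos` and `Real.sSup_nonneg` also cover `T = ∅`, where `sSup ∅ = 0`.
    exact le_antisymm (Real.sSup_nonpos fun r hr => (hzero r hr).le)
      (Real.sSup_nonneg fun r hr => (hzero r hr).ge)

theorem inter_nonempty_and_inter_nonempty_of_inter_inter_nonempty {T A B : Set α}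
    (h : (T ∩ (A ∩ B)).Nonempty) : (T ∩ A).Nonempty ∧ (T ∩ B).Nonempty :=
  ⟨h.mono (inter_subset_inter_right _ inter_subset_left),
    h.mono (inter_subset_inter_right _ inter_subset_right)⟩

theorem inter_union_nonempty_or_inter_inter_nonempty_iff (T A B : Set α) :
    (T ∩ (A ∪ B)).Nonempty ∨ (T ∩ (A ∩ B)).Nonempty ↔ (T ∩ A).Nonempty ∨ (T ∩ B).Nonempty := by
  rw [inter_union_distrib_left, union_nonempty]
  exact or_iff_left_of_imp fun h =>
    .inl (inter_nonempty_and_inter_nonempty_of_inter_inter_nonempty h).1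

end Set

theorem Metric.setOf_ball_inter_nonempty_eq_thickening {X : Type*} [PseudoMetricSpace X]
    (ε : ℝ) (S : Set X) : {x | (ball x ε ∩ S).Nonempty} = thickening ε S := by
  ext x
  simp only [mem_ofPred_eq, mem_thickening_iff, Set.Nonempty, mem_inter_iff, mem_ball,
    dist_comm x, and_comm]

section AdversarialRisk

variable {X : Type*}

/-- The points that the classifier `S`, which predicts `true` exactly on `S`, labels differently
from `b`. -/
def misclassified (S : Set X) (b : Bool) : Set X := if b then Sᶜ else S

theorem abs_indicator_one_sub_ite (S : Set X) (b : Bool) (x : X) :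
    |S.indicator (fun _ => (1 : ℝ)) x - (if b then 1 else 0)| =
      (misclassified S b).indicator (fun _ => 1) x := by
  cases b <;> by_cases hx : x ∈ S <;> simp [misclassified, hx]

variable [PseudoMetricSpace X]

def advErrorEvent (ε : ℝ) (S : Set X) : Set (X × Bool) :=
  {p | (ball p.1 ε ∩ misclassified S p.2).Nonempty}

theorem measurableSet_advErrorEvent [MeasurableSpace X] [OpensMeasurableSpace X] (ε : ℝ)
    (S : Set X) : MeasurableSet (advErrorEvent ε S) := by
  refine measurableSet_setOfPred.mpr (measurable_from_prod_countable_left fun b => ?_)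
  refine measurableSet_setOfPred.mp ?_
  change MeasurableSet {x | (ball x ε ∩ misclassified S b).Nonempty}
  rw [setOf_ball_inter_nonempty_eq_thickening]
  exact isOpen_thickening.measurableSet

theorem advErrorEvent_union_union_advErrorEvent_inter (ε : ℝ) (A B : Set X) :
    advErrorEvent ε (A ∪ B) ∪ advErrorEvent ε (A ∩ B) = advErrorEvent ε A ∪ advErrorEvent ε B := by
  ext ⟨x, b⟩
  cases b
  · exact inter_union_nonempty_or_inter_inter_nonempty_iff _ _ _
  · simpa only [mem_union, advErrorEvent, misclassified, mem_ofPred_eq, if_true, compl_union,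
      compl_inter, or_comm] using inter_union_nonempty_or_inter_inter_nonempty_iff (ball x ε) Aᶜ Bᶜ

theorem advErrorEvent_union_inter_advErrorEvent_inter_subset (ε : ℝ) (A B : Set X) :
    advErrorEvent ε (A ∪ B) ∩ advErrorEvent ε (A ∩ B) ⊆ advErrorEvent ε A ∩ advErrorEvent ε B := by
  rintro ⟨x, b⟩ hx
  cases b
  · exact inter_nonempty_and_inter_nonempty_of_inter_inter_nonempty hx.2
  · simp only [mem_inter_iff, advErrorEvent, misclassified, mem_ofPred_eq, if_true, compl_union,
      compl_inter] at hx ⊢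
    exact inter_nonempty_and_inter_nonempty_of_inter_inter_nonempty hx.1

end AdversarialRisk

theorem advRisk_eq_measureReal {X : Type*} [MetricSpace X] [MeasurableSpace X]
    [OpensMeasurableSpace X] (μ : Measure (X × Bool)) (ε : ℝ) (S : Set X) :
    advRisk μ ε S = μ.real (advErrorEvent ε S) := by
  rw [← integral_indicator_one (measurableSet_advErrorEvent ε S), advRisk]
  congr 1 with p
  simp only [abs_indicator_one_sub_ite]
  rw [sSup_image_indicator_one]
  rfl

theorem advRisk_submodular_general {X : Type*} [MetricSpace X] [MeasurableSpace X] [BorelSpace X]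
    (μ : Measure (X × Bool)) [IsProbabilityMeasure μ] (ε : ℝ)
    (A B : Set X) :
    advRisk μ ε (A ∪ B) + advRisk μ ε (A ∩ B) ≤ advRisk μ ε A + advRisk μ ε B := by
  simp only [advRisk_eq_measureReal]
  exact measureReal_add_le_of_union_subset_of_inter_subset (measurableSet_advErrorEvent ε _)
    (measurableSet_advErrorEvent ε _) (advErrorEvent_union_union_advErrorEvent_inter ε A B).le
    (advErrorEvent_union_inter_advErrorEvent_inter_subset ε A B)

theorem advRisk_submodular {X : Type*} [MetricSpace X] [MeasurableSpace X] [BorelSpace X]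
    [TopologicalSpace.SeparableSpace X]
    (μ : Measure (X × Bool)) [IsProbabilityMeasure μ] (ε : ℝ) (hε : 0 < ε)
    (A B : Set X) (hA : MeasurableSet A) (hB : MeasurableSet B) :
    advRisk μ ε (A ∪ B) + advRisk μ ε (A ∩ B) ≤ advRisk μ ε A + advRisk μ ε B :=
  advRisk_submodular_general μ ε A B
end

section
/- If A and B are both minimizers of the adversarial risk R̃_ε over Borel subsets of X, then A ∪ B and A ∩ B are also minimizers of R̃_ε. -/
open Set Metric MeasureTheory

/-!
For `ε > 0` the inner supremum in `advRisk` is the indicator of the `ε`-thickening of the set of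
points that `C` misclassifies, so `advRisk μ ε C` is the `μ`-measure of a region `advRegion ε C`.
Thickening is monotone and commutes with unions, which makes `C ↦ μ (advRegion ε C)` submodular.
For minimizers `A`, `B` of a submodular `f`,
`f (A ∪ B) + f (A ∩ B) ≤ f A + f B ≤ f (A ∪ B) + f (A ∩ B)`, forcing equality throughout.
-/

theorem IsMinOn.sup_inf_of_submodular {α β : Type*} [Lattice α] [AddCommMonoid β]
    [PartialOrder β] [IsOrderedCancelAddMonoid β] {f : α → β} {s : Set α} {a b : α}
    (hf : f (a ⊔ b) + f (a ⊓ b) ≤ f a + f b) (ha : IsMinOn f s a) (hb : IsMinOn f s b)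
    (hsup : a ⊔ b ∈ s) (hinf : a ⊓ b ∈ s) :
    IsMinOn f s (a ⊔ b) ∧ IsMinOn f s (a ⊓ b) := by
  have hsup_le : f (a ⊔ b) ≤ f a :=
    le_of_add_le_add_right (hf.trans (add_le_add le_rfl (hb hinf)))
  have hinf_le : f (a ⊓ b) ≤ f b :=
    le_of_add_le_add_left (hf.trans (add_le_add (ha hsup) le_rfl))
  exact ⟨fun x hx => hsup_le.trans (ha hx), fun x hx => hinf_le.trans (hb hx)⟩

namespace Metric

variable {X : Type*} [MetricSpace X]

theorem sSup_image_indicator_one_ball {ε : ℝ} (hε : 0 < ε) (C : Set X) (x : X) :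
    sSup ((C.indicator fun _ => (1 : ℝ)) '' ball x ε) =
      (thickening ε C).indicator (fun _ => 1) x := by
  have hle : ∀ y ∈ (C.indicator fun _ => (1 : ℝ)) '' ball x ε, y ≤ 1 := by
    rintro _ ⟨w, -, rfl⟩
    exact indicator_apply_le' (fun _ => le_rfl) (fun _ => zero_le_one)
  by_cases hx : x ∈ thickening ε C
  · obtain ⟨z, hzC, hxz⟩ := mem_thickening_iff.1 hx
    have h1 : (1 : ℝ) ∈ (C.indicator fun _ => (1 : ℝ)) '' ball x ε :=
      ⟨z, mem_ball'.2 hxz, indicator_of_mem hzC _⟩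
    rw [indicator_of_mem hx]
    exact le_antisymm (csSup_le ⟨1, h1⟩ hle) (le_csSup ⟨1, hle⟩ h1)
  · have hzero : ∀ w ∈ ball x ε, C.indicator (fun _ => (1 : ℝ)) w = 0 := fun w hw =>
      indicator_of_notMem (fun hwC => hx (mem_thickening_iff.2 ⟨w, hwC, mem_ball'.1 hw⟩)) _
    rw [indicator_of_notMem hx, image_congr hzero, (nonempty_ball.2 hε).image_const,
      csSup_singleton]

end Metric

section AdversarialRisk

variable {X : Type*} [MetricSpace X]

/-- The labelled points `(x, y)` such that some point of `ball x ε` is misclassified by `C`. -/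
def advRegion (ε : ℝ) (C : Set X) : Set (X × Bool) :=
  thickening ε C ×ˢ {false} ∪ thickening ε Cᶜ ×ˢ {true}

theorem mem_advRegion {ε : ℝ} {C : Set X} {x : X} {b : Bool} :
    (x, b) ∈ advRegion ε C ↔ x ∈ thickening ε (if b then Cᶜ else C) := by
  cases b <;> simp [advRegion]

theorem measurableSet_advRegion [MeasurableSpace X] [OpensMeasurableSpace X] (ε : ℝ)
    (C : Set X) :
    MeasurableSet (advRegion ε C) :=
  (isOpen_thickening.measurableSet.prod (measurableSet_singleton _)).union
    (isOpen_thickening.measurableSet.prod (measurableSet_singleton _))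

theorem advRegion_union_union_advRegion_inter_subset (ε : ℝ) (S T : Set X) :
    advRegion ε (S ∪ T) ∪ advRegion ε (S ∩ T) ⊆ advRegion ε S ∪ advRegion ε T := by
  have hS := thickening_subset_of_subset ε (inter_subset_left (s := S) (t := T))
  have hSc := thickening_subset_of_subset ε (inter_subset_left (s := Sᶜ) (t := Tᶜ))
  rintro ⟨x, _ | _⟩ <;>
    simp only [mem_union, mem_advRegion, Bool.false_eq_true, ↓reduceIte,
      thickening_union, compl_union, compl_inter] <;> tauto

theorem advRegion_union_inter_advRegion_inter_subset (ε : ℝ) (S T : Set X) :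
    advRegion ε (S ∪ T) ∩ advRegion ε (S ∩ T) ⊆ advRegion ε S ∩ advRegion ε T := by
  have hS := thickening_subset_of_subset ε (inter_subset_left (s := S) (t := T))
  have hT := thickening_subset_of_subset ε (inter_subset_right (s := S) (t := T))
  have hSc := thickening_subset_of_subset ε (inter_subset_left (s := Sᶜ) (t := Tᶜ))
  have hTc := thickening_subset_of_subset ε (inter_subset_right (s := Sᶜ) (t := Tᶜ))
  rintro ⟨x, _ | _⟩ <;>
    simp only [mem_union, mem_inter_iff, mem_advRegion, Bool.false_eq_true, ↓reduceIte,
      thickening_union, compl_union, compl_inter] <;> tauto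

theorem advRisk_eq_measureReal_advRegion [MeasurableSpace X] [OpensMeasurableSpace X]
    (μ : Measure (X × Bool)) {ε : ℝ} (hε : 0 < ε) (C : Set X) :
    advRisk μ ε C = μ.real (advRegion ε C) := by
  rw [advRisk, ← integral_indicator_one (measurableSet_advRegion ε C)]
  congr 1 with ⟨x, b⟩
  have hloss : (fun xt => |C.indicator (fun _ => (1 : ℝ)) xt - (if b then 1 else 0)|) =
      (if b then Cᶜ else C).indicator fun _ => 1 := by
    funext xt; cases b <;> by_cases h : xt ∈ C <;> simp [h]
  rw [hloss, sSup_image_indicator_one_ball hε]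
  by_cases h : (x, b) ∈ advRegion ε C
  · rw [indicator_of_mem h, indicator_of_mem (mem_advRegion.1 h)]
    rfl
  · rw [indicator_of_notMem h, indicator_of_notMem (mem_advRegion.not.1 h)]

theorem advRisk_union_add_inter_le [MeasurableSpace X] [OpensMeasurableSpace X]
    (μ : Measure (X × Bool)) [IsFiniteMeasure μ] {ε : ℝ} (hε : 0 < ε) (S T : Set X) :
    advRisk μ ε (S ∪ T) + advRisk μ ε (S ∩ T) ≤ advRisk μ ε S + advRisk μ ε T := by
  simp only [advRisk_eq_measureReal_advRegion μ hε]
  rw [← measureReal_union_add_inter (measurableSet_advRegion ε _),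
    ← measureReal_union_add_inter (measurableSet_advRegion ε _)]
  exact add_le_add (measureReal_mono (advRegion_union_union_advRegion_inter_subset ε S T))
    (measureReal_mono (advRegion_union_inter_advRegion_inter_subset ε S T))

end AdversarialRisk

theorem union_inter_minimizers_general {X : Type*} [MetricSpace X] [MeasurableSpace X] [BorelSpace X]
    (μ : Measure (X × Bool)) [IsProbabilityMeasure μ] (ε : ℝ) (hε : 0 < ε)
    (A B : Set X) (hA : MeasurableSet A) (hB : MeasurableSet B)
    (hAmin : ∀ C : Set X, MeasurableSet C → advRisk μ ε A ≤ advRisk μ ε C)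
    (hBmin : ∀ C : Set X, MeasurableSet C → advRisk μ ε B ≤ advRisk μ ε C) :
    (∀ C : Set X, MeasurableSet C → advRisk μ ε (A ∪ B) ≤ advRisk μ ε C) ∧
    (∀ C : Set X, MeasurableSet C → advRisk μ ε (A ∩ B) ≤ advRisk μ ε C) := by
  refine (IsMinOn.sup_inf_of_submodular (s := {C | MeasurableSet C})
    (advRisk_union_add_inter_le μ hε A B) (isMinOn_iff.2 hAmin) (isMinOn_iff.2 hBmin)
    (hA.union hB) (hA.inter hB)).imp isMinOn_iff.1 isMinOn_iff.1

theorem union_inter_minimizers {X : Type*} [MetricSpace X] [MeasurableSpace X] [BorelSpace X]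
    [TopologicalSpace.SeparableSpace X]
    (μ : Measure (X × Bool)) [IsProbabilityMeasure μ] (ε : ℝ) (hε : 0 < ε)
    (A B : Set X) (hA : MeasurableSet A) (hB : MeasurableSet B)
    (hAmin : ∀ C : Set X, MeasurableSet C → advRisk μ ε A ≤ advRisk μ ε C)
    (hBmin : ∀ C : Set X, MeasurableSet C → advRisk μ ε B ≤ advRisk μ ε C) :
    (∀ C : Set X, MeasurableSet C → advRisk μ ε (A ∪ B) ≤ advRisk μ ε C) ∧
    (∀ C : Set X, MeasurableSet C → advRisk μ ε (A ∩ B) ≤ advRisk μ ε C) :=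
  union_inter_minimizers_general μ ε hε A B hA hB hAmin hBmin
end

section
/- Closing and opening do not increase the adversarial risk: for any Borel set A ⊆ X, R̃_ε(cl_ε(A)) ≤ R̃_ε(A) and R̃_ε(op_ε(A)) ≤ R̃_ε(A). Consequently, if A minimizes R̃_ε over Borel sets then so do cl_ε(A) and op_ε(A). -/
open Set Metric MeasureTheory

/-- The dilation `A^ε = {x : dist(x,A) < ε}`. -/
noncomputable def dilation {X : Type*} [PseudoMetricSpace X] (ε : ℝ) (A : Set X) : Set X :=
  Metric.thickening ε A

/-- The erosion `A^{−ε} = {x : dist(x,Aᶜ) ≥ ε}`. -/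
noncomputable def erosion {X : Type*} [PseudoMetricSpace X] (ε : ℝ) (A : Set X) : Set X :=
  {x | ENNReal.ofReal ε ≤ EMetric.infEdist x Aᶜ}

/-- The closing `cl_ε(A) = (A^ε)^{−ε}`. -/
noncomputable def closing {X : Type*} [PseudoMetricSpace X] (ε : ℝ) (A : Set X) : Set X :=
  erosion ε (dilation ε A)

/-- The opening `op_ε(A) = (A^{−ε})^ε`. -/
noncomputable def opening {X : Type*} [PseudoMetricSpace X] (ε : ℝ) (A : Set X) : Set X :=
  dilation ε (erosion ε A)

/-- The adversarial risk in morphological form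
`R̃_ε(A) = w₀ ρ₀(A^ε) + w₁(1 − ρ₁(A^{−ε}))`. -/
noncomputable def morphRisk {X : Type*} [PseudoMetricSpace X] [MeasurableSpace X]
    (ρ₀ ρ₁ : Measure X) (w₀ w₁ ε : ℝ) (A : Set X) : ℝ :=
  w₀ * (ρ₀ (dilation ε A)).toReal + w₁ * (1 - (ρ₁ (erosion ε A)).toReal)

/-! Dilation and erosion by `ε` form a Galois connection, `A^ε ⊆ B ↔ A ⊆ B^{−ε}`: both say
that every `ε`-ball centred in `A` lies in `B`. So closing is a closure operator and opening an
interior operator, and `(cl_ε A)^ε = A^ε`, `(op_ε A)^{−ε} = A^{−ε}`. Closing therefore keeps the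
dilation and enlarges the erosion, opening keeps the erosion and shrinks the dilation, and the
risk, increasing in `ρ₀(A^ε)` and decreasing in `ρ₁(A^{−ε})`, can only go down. -/

section Morphology

variable {X : Type*} [PseudoMetricSpace X] (ε : ℝ)

theorem mem_erosion_iff {A : Set X} {x : X} :
    x ∈ erosion ε A ↔ ∀ y ∉ A, ENNReal.ofReal ε ≤ edist x y :=
  le_infEDist

theorem dilation_subset_iff_subset_erosion {A B : Set X} :
    dilation ε A ⊆ B ↔ A ⊆ erosion ε B := by
  simp only [dilation, subset_def, mem_thickening_iff_infEDist_lt, mem_erosion_iff]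
  constructor
  · intro h a ha y hyB
    by_contra! hlt
    exact hyB (h y ((infEDist_le_edist_of_mem ha).trans_lt (edist_comm y a ▸ hlt)))
  · intro h x hx
    obtain ⟨a, ha, hxa⟩ := infEDist_lt_iff.1 hx
    by_contra hxB
    exact (h a ha x hxB).not_gt (edist_comm x a ▸ hxa)

theorem gc_dilation_erosion : GaloisConnection (dilation ε) (erosion ε : Set X → Set X) :=
  fun _ _ => dilation_subset_iff_subset_erosion ε

theorem dilation_mono : Monotone (dilation ε : Set X → Set X) :=
  (gc_dilation_erosion ε).monotone_l

theorem erosion_mono : Monotone (erosion ε : Set X → Set X) :=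
  (gc_dilation_erosion ε).monotone_u

theorem subset_closing (A : Set X) : A ⊆ closing ε A :=
  (gc_dilation_erosion ε).le_u_l A

theorem opening_subset (A : Set X) : opening ε A ⊆ A :=
  (gc_dilation_erosion ε).l_u_le A

theorem dilation_closing (A : Set X) : dilation ε (closing ε A) = dilation ε A :=
  (gc_dilation_erosion ε).l_u_l_eq_l A

theorem erosion_opening (A : Set X) : erosion ε (opening ε A) = erosion ε A :=
  (gc_dilation_erosion ε).u_l_u_eq_u A

end Morphology

section Risk

variable {X : Type*} [PseudoMetricSpace X] [MeasurableSpace X]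
  (ρ₀ ρ₁ : Measure X) [IsFiniteMeasure ρ₀] [IsFiniteMeasure ρ₁]
  {w₀ w₁ : ℝ} (hw₀ : 0 ≤ w₀) (hw₁ : 0 ≤ w₁) (ε : ℝ)
include hw₀ hw₁

theorem morphRisk_le_of_dilation_subset_of_erosion_subset {A B : Set X}
    (hdil : dilation ε B ⊆ dilation ε A) (hero : erosion ε A ⊆ erosion ε B) :
    morphRisk ρ₀ ρ₁ w₀ w₁ ε B ≤ morphRisk ρ₀ ρ₁ w₀ w₁ ε A := by
  have h₀ : (ρ₀ (dilation ε B)).toReal ≤ (ρ₀ (dilation ε A)).toReal :=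
    ENNReal.toReal_mono (measure_ne_top _ _) (measure_mono hdil)
  have h₁ : (ρ₁ (erosion ε A)).toReal ≤ (ρ₁ (erosion ε B)).toReal :=
    ENNReal.toReal_mono (measure_ne_top _ _) (measure_mono hero)
  unfold morphRisk
  gcongr

theorem morphRisk_closing_le (A : Set X) :
    morphRisk ρ₀ ρ₁ w₀ w₁ ε (closing ε A) ≤ morphRisk ρ₀ ρ₁ w₀ w₁ ε A :=
  morphRisk_le_of_dilation_subset_of_erosion_subset ρ₀ ρ₁ hw₀ hw₁ ε
    (dilation_closing ε A).subset (erosion_mono ε (subset_closing ε A))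

theorem morphRisk_opening_le (A : Set X) :
    morphRisk ρ₀ ρ₁ w₀ w₁ ε (opening ε A) ≤ morphRisk ρ₀ ρ₁ w₀ w₁ ε A :=
  morphRisk_le_of_dilation_subset_of_erosion_subset ρ₀ ρ₁ hw₀ hw₁ ε
    (dilation_mono ε (opening_subset ε A)) (erosion_opening ε A).superset

end Risk

theorem closing_opening_decrease_risk_general {X : Type*} [MetricSpace X] [MeasurableSpace X]
    (ρ₀ ρ₁ : Measure X) [IsProbabilityMeasure ρ₀] [IsProbabilityMeasure ρ₁]
    (w₀ w₁ : ℝ) (hw₀ : 0 ≤ w₀) (hw₁ : 0 ≤ w₁)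
    (ε : ℝ) (A : Set X) :
    (morphRisk ρ₀ ρ₁ w₀ w₁ ε (closing ε A) ≤ morphRisk ρ₀ ρ₁ w₀ w₁ ε A ∧
      morphRisk ρ₀ ρ₁ w₀ w₁ ε (opening ε A) ≤ morphRisk ρ₀ ρ₁ w₀ w₁ ε A) ∧
    ((∀ C : Set X, MeasurableSet C → morphRisk ρ₀ ρ₁ w₀ w₁ ε A ≤ morphRisk ρ₀ ρ₁ w₀ w₁ ε C) →
      (∀ C : Set X, MeasurableSet C →
        morphRisk ρ₀ ρ₁ w₀ w₁ ε (closing ε A) ≤ morphRisk ρ₀ ρ₁ w₀ w₁ ε C) ∧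
      (∀ C : Set X, MeasurableSet C →
        morphRisk ρ₀ ρ₁ w₀ w₁ ε (opening ε A) ≤ morphRisk ρ₀ ρ₁ w₀ w₁ ε C)) := by
  have hcl := morphRisk_closing_le ρ₀ ρ₁ hw₀ hw₁ ε A
  have hop := morphRisk_opening_le ρ₀ ρ₁ hw₀ hw₁ ε A
  exact ⟨⟨hcl, hop⟩, fun hmin =>
    ⟨fun C hC => hcl.trans (hmin C hC), fun C hC => hop.trans (hmin C hC)⟩⟩

theorem closing_opening_decrease_risk {X : Type*} [MetricSpace X] [MeasurableSpace X]
    [BorelSpace X]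
    (ρ₀ ρ₁ : Measure X) [IsProbabilityMeasure ρ₀] [IsProbabilityMeasure ρ₁]
    (w₀ w₁ : ℝ) (hw₀ : 0 ≤ w₀) (hw₁ : 0 ≤ w₁)
    (ε : ℝ) (hε : 0 < ε) (A : Set X) (hA : MeasurableSet A) :
    (morphRisk ρ₀ ρ₁ w₀ w₁ ε (closing ε A) ≤ morphRisk ρ₀ ρ₁ w₀ w₁ ε A ∧
      morphRisk ρ₀ ρ₁ w₀ w₁ ε (opening ε A) ≤ morphRisk ρ₀ ρ₁ w₀ w₁ ε A) ∧
    ((∀ C : Set X, MeasurableSet C → morphRisk ρ₀ ρ₁ w₀ w₁ ε A ≤ morphRisk ρ₀ ρ₁ w₀ w₁ ε C) →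
      (∀ C : Set X, MeasurableSet C →
        morphRisk ρ₀ ρ₁ w₀ w₁ ε (closing ε A) ≤ morphRisk ρ₀ ρ₁ w₀ w₁ ε C) ∧
      (∀ C : Set X, MeasurableSet C →
        morphRisk ρ₀ ρ₁ w₀ w₁ ε (opening ε A) ≤ morphRisk ρ₀ ρ₁ w₀ w₁ ε C)) :=
  closing_opening_decrease_risk_general ρ₀ ρ₁ w₀ w₁ hw₀ hw₁ ε A
end

section
/- If (X,d,ν) is a metric measure space with finite measure ν satisfying the Lebesgue differentiation property, and u_k ⇀* u in L^∞(X;ν), then for ν-a.e. x ∈ X and every ε > 0: limsup_k essinf_{ν, B_ε(x)} u_k ≤ u(x) ≤ liminf_k esssup_{ν, B_ε(x)} u_k. -/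
/-!
By Banach–Steinhaus on `L¹`, a weak-* convergent sequence is uniformly bounded in `L^∞`, and
testing against indicators of balls shows that `⨍_{B_δ(x)} u_k → ⨍_{B_δ(x)} u` as `k → ∞`.
For `δ ≤ ε`, `essinf_{B_ε(x)} u_k ≤ ⨍_{B_δ(x)} u_k ≤ esssup_{B_ε(x)} u_k`, so the `limsup` of the
essential infima and the `liminf` of the essential suprema are squeezed around `⨍_{B_δ(x)} u`,
which tends to `u x` as `δ → 0` at Lebesgue points of `u`. The uniform bound is what keeps these
`limsup`/`liminf` in `ℝ` from being junk values, and differentiating the constant `1` shows that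
at almost every `x` all balls have positive measure.
-/

open Set Metric MeasureTheory Filter
open scoped ENNReal Topology

section

variable {α : Type*} [MeasurableSpace α] {μ : Measure α}

lemma ae_abs_le_of_forall_abs_setIntegral_le [IsFiniteMeasure μ] {f : α → ℝ}
    (hf : Integrable f μ) {C : ℝ}
    (h : ∀ s, MeasurableSet s → |∫ x in s, f x ∂μ| ≤ C * μ.real s) :
    ∀ᵐ x ∂μ, |f x| ≤ C := by
  have hle : f ≤ᵐ[μ] fun _ => C :=
    ae_le_of_forall_setIntegral_le hf (integrable_const C) fun s hs _ => by
      rw [setIntegral_const, smul_eq_mul, mul_comm]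
      exact (le_abs_self _).trans (h s hs)
  have hge : (fun _ => -C) ≤ᵐ[μ] f :=
    ae_le_of_forall_setIntegral_le (integrable_const (-C)) hf fun s hs _ => by
      rw [setIntegral_const, smul_eq_mul, mul_comm, neg_mul]
      exact neg_le.1 ((neg_le_abs _).trans (h s hs))
  filter_upwards [hle, hge] with x hx hx' using abs_le.2 ⟨hx', hx⟩

noncomputable def linftyPairing (f : Lp ℝ ∞ μ) : Lp ℝ 1 μ →L[ℝ] ℝ :=
  (ContinuousLinearMap.mul ℝ ℝ).lpPairing μ ∞ 1 f

lemma linftyPairing_toLp_apply {f : α → ℝ} (hf : MemLp f ∞ μ) (φ : Lp ℝ 1 μ) :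
    linftyPairing (hf.toLp f) φ = ∫ x, f x * φ x ∂μ := by
  rw [linftyPairing, ContinuousLinearMap.lpPairing_eq_integral]
  refine integral_congr_ae ?_
  filter_upwards [hf.coeFn_toLp] with x hx
  simp [hx]

lemma ae_abs_le_of_norm_linftyPairing_le [IsFiniteMeasure μ] {f : α → ℝ} (hf : MemLp f ∞ μ)
    {C : ℝ} (hC : ‖linftyPairing (hf.toLp f)‖ ≤ C) :
    ∀ᵐ x ∂μ, |f x| ≤ C := by
  refine ae_abs_le_of_forall_abs_setIntegral_le (hf.integrable le_top) fun s hs => ?_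
  let φ : Lp ℝ 1 μ := indicatorConstLp 1 hs (measure_ne_top μ s) 1
  have hφ : ‖φ‖ = μ.real s := by
    simp [φ, norm_indicatorConstLp one_ne_zero ENNReal.one_ne_top]
  have hpair : linftyPairing (hf.toLp f) φ = ∫ x in s, f x ∂μ := by
    rw [linftyPairing_toLp_apply, ← integral_indicator hs]
    refine integral_congr_ae ?_
    filter_upwards [indicatorConstLp_coeFn (p := 1) (hs := hs) (hμs := measure_ne_top μ s)
      (c := (1 : ℝ))] with x hx
    rw [hx, ← indicator_mul_right]
    simp only [mul_one]
  calc |∫ x in s, f x ∂μ| = ‖linftyPairing (hf.toLp f) φ‖ := by rw [hpair, Real.norm_eq_abs]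
    _ ≤ ‖linftyPairing (hf.toLp f)‖ * ‖φ‖ := ContinuousLinearMap.le_opNorm _ _
    _ ≤ C * μ.real s := hφ ▸ mul_le_mul_of_nonneg_right hC (norm_nonneg _)

lemma exists_ae_abs_le_of_forall_bounded_integral_mul [IsFiniteMeasure μ] {ι : Type*}
    {f : ι → α → ℝ} (hf : ∀ i, MemLp (f i) ∞ μ)
    (h : ∀ φ : α → ℝ, Integrable φ μ → ∃ C, ∀ i, |∫ x, f i x * φ x ∂μ| ≤ C) :
    ∃ C, ∀ i, ∀ᵐ x ∂μ, |f i x| ≤ C := by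
  obtain ⟨C, hC⟩ := banach_steinhaus (g := fun i => linftyPairing ((hf i).toLp (f i)))
    fun φ => by
      simpa only [linftyPairing_toLp_apply, Real.norm_eq_abs] using h φ (L1.integrable_coeFn φ)
  exact ⟨C, fun i => ae_abs_le_of_norm_linftyPairing_le (hf i) (hC i)⟩

lemma tendsto_setAverage_of_tendsto_integral_mul {ι : Type*} {l : Filter ι}
    {f : ι → α → ℝ} {g : α → ℝ} {s : Set α} (hs : MeasurableSet s) (hμs : μ s ≠ ∞)
    (h : ∀ φ : α → ℝ, Integrable φ μ →
      Tendsto (fun i => ∫ x, f i x * φ x ∂μ) l (𝓝 (∫ x, g x * φ x ∂μ))) :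
    Tendsto (fun i => ⨍ x in s, f i x ∂μ) l (𝓝 (⨍ x in s, g x ∂μ)) := by
  have hφ : Integrable (s.indicator fun _ => (1 : ℝ)) μ :=
    (integrable_indicator_iff hs).2 (integrableOn_const hμs)
  have hmul (F : α → ℝ) :
      ∫ x, F x * s.indicator (fun _ => (1 : ℝ)) x ∂μ = ∫ x in s, F x ∂μ := by
    simp_rw [← indicator_mul_right, mul_one, integral_indicator hs]
  have hint := h _ hφ
  simp only [hmul] at hint
  simpa only [setAverage_eq] using hint.const_smul (μ.real s)⁻¹

lemma essInf_le_setAverage {f : α → ℝ} {s t : Set α} (hst : s ⊆ t) (hs : μ s ≠ 0)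
    (hs' : μ s ≠ ∞) (hf : IntegrableOn f s μ)
    (hbdd : IsBoundedUnder (· ≥ ·) (ae (μ.restrict t)) f) :
    essInf f (μ.restrict t) ≤ ⨍ x in s, f x ∂μ := by
  have : Fact (μ s < ∞) := ⟨hs'.lt_top⟩
  obtain ⟨x, hx, hxf⟩ := exists_notMem_null_le_average (by simpa using hs) hf
    (ae_iff.1 (ae_restrict_of_ae_restrict_of_subset hst (ae_essInf_le hbdd)))
  exact (not_not.1 hx).trans hxf

lemma setAverage_le_essSup {f : α → ℝ} {s t : Set α} (hst : s ⊆ t) (hs : μ s ≠ 0)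
    (hs' : μ s ≠ ∞) (hf : IntegrableOn f s μ)
    (hbdd : IsBoundedUnder (· ≤ ·) (ae (μ.restrict t)) f) :
    ⨍ x in s, f x ∂μ ≤ essSup f (μ.restrict t) := by
  have : Fact (μ s < ∞) := ⟨hs'.lt_top⟩
  obtain ⟨x, hx, hxf⟩ := exists_notMem_null_average_le (by simpa using hs) hf
    (ae_iff.1 (ae_restrict_of_ae_restrict_of_subset hst (ae_le_essSup hbdd)))
  exact hxf.trans (not_not.1 hx)

section UniformlyBounded

variable {ι : Type*} {l : Filter ι} [l.NeBot] {f : ι → α → ℝ} {s t : Set α} {C L : ℝ}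

lemma limsup_essInf_le_of_tendsto_setAverage (hst : s ⊆ t) (hs : μ s ≠ 0) (hs' : μ s ≠ ∞)
    (hf : ∀ i, IntegrableOn (f i) s μ) (hC : ∀ i, ∀ᵐ x ∂μ.restrict t, |f i x| ≤ C)
    (hL : Tendsto (fun i => ⨍ x in s, f i x ∂μ) l (𝓝 L)) :
    limsup (fun i => essInf (f i) (μ.restrict t)) l ≤ L := by
  have : (ae (μ.restrict t)).NeBot :=
    ae_neBot.2 fun h => hs (measure_mono_null hst (Measure.restrict_eq_zero.1 h))
  have hbdd_below (i : ι) : IsBoundedUnder (· ≥ ·) (ae (μ.restrict t)) (f i) :=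
    ⟨-C, eventually_map.2 <| (hC i).mono fun x hx => neg_le_of_abs_le hx⟩
  have hbdd_above (i : ι) : IsBoundedUnder (· ≤ ·) (ae (μ.restrict t)) (f i) :=
    ⟨C, eventually_map.2 <| (hC i).mono fun x hx => le_of_abs_le hx⟩
  have hcobdd : IsCoboundedUnder (· ≤ ·) l fun i => essInf (f i) (μ.restrict t) :=
    isBoundedUnder_of_eventually_ge (a := -C) (.of_forall fun i => le_essInf_of_ae_le _
      ((hC i).mono fun x hx => neg_le_of_abs_le hx) (hbdd_above i).isCoboundedUnder_ge)
      |>.isCoboundedUnder_le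
  calc limsup (fun i => essInf (f i) (μ.restrict t)) l
      ≤ limsup (fun i => ⨍ x in s, f i x ∂μ) l :=
        limsup_le_limsup (.of_forall fun i => essInf_le_setAverage hst hs hs' (hf i)
          (hbdd_below i)) hcobdd hL.isBoundedUnder_le
    _ = L := hL.limsup_eq

lemma le_liminf_essSup_of_tendsto_setAverage (hst : s ⊆ t) (hs : μ s ≠ 0) (hs' : μ s ≠ ∞)
    (hf : ∀ i, IntegrableOn (f i) s μ) (hC : ∀ i, ∀ᵐ x ∂μ.restrict t, |f i x| ≤ C)
    (hL : Tendsto (fun i => ⨍ x in s, f i x ∂μ) l (𝓝 L)) :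
    L ≤ liminf (fun i => essSup (f i) (μ.restrict t)) l := by
  have : (ae (μ.restrict t)).NeBot :=
    ae_neBot.2 fun h => hs (measure_mono_null hst (Measure.restrict_eq_zero.1 h))
  have hbdd_below (i : ι) : IsBoundedUnder (· ≥ ·) (ae (μ.restrict t)) (f i) :=
    ⟨-C, eventually_map.2 <| (hC i).mono fun x hx => neg_le_of_abs_le hx⟩
  have hbdd_above (i : ι) : IsBoundedUnder (· ≤ ·) (ae (μ.restrict t)) (f i) :=
    ⟨C, eventually_map.2 <| (hC i).mono fun x hx => le_of_abs_le hx⟩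
  have hcobdd : IsCoboundedUnder (· ≥ ·) l fun i => essSup (f i) (μ.restrict t) :=
    isBoundedUnder_of_eventually_le (a := C) (.of_forall fun i => essSup_le_of_ae_le _
      ((hC i).mono fun x hx => le_of_abs_le hx) (hbdd_below i).isCoboundedUnder_le)
      |>.isCoboundedUnder_ge
  calc L = liminf (fun i => ⨍ x in s, f i x ∂μ) l := hL.liminf_eq.symm
    _ ≤ liminf (fun i => essSup (f i) (μ.restrict t)) l :=
        liminf_le_liminf (.of_forall fun i => setAverage_le_essSup hst hs hs' (hf i)
          (hbdd_above i)) hL.isBoundedUnder_ge hcobdd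

end UniformlyBounded

end

lemma measure_ball_ne_zero_of_tendsto_setAverage_one {X : Type*} [PseudoMetricSpace X]
    [MeasurableSpace X] {ν : Measure X} {x : X}
    (h : Tendsto (fun r => ⨍ _ in ball x r, (1 : ℝ) ∂ν) (𝓝[>] 0) (𝓝 1)) {ε : ℝ} (hε : 0 < ε) :
    ν (ball x ε) ≠ 0 := by
  intro h0
  have hzero : ∀ᶠ r in 𝓝[>] (0 : ℝ), ⨍ _ in ball x r, (1 : ℝ) ∂ν = 0 := by
    filter_upwards [Ioc_mem_nhdsGT hε] with r hr
    rw [Measure.restrict_eq_zero.2 (measure_mono_null (ball_subset_ball hr.2) h0),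
      average_zero_measure]
  exact one_ne_zero <|
    tendsto_nhds_unique h (tendsto_const_nhds.congr' (hzero.mono fun _ h => h.symm))

theorem weakstar_essinf_esssup_bounds {X : Type*} [MetricSpace X] [MeasurableSpace X]
    [BorelSpace X]
    (ν : Measure X) [IsFiniteMeasure ν]
    -- `ν` satisfies the Lebesgue differentiation property
    (hLDP : ∀ f : X → ℝ, Integrable f ν → ∀ᵐ x ∂ν,
      Tendsto (fun r : ℝ => ((ν (ball x r)).toReal)⁻¹ * ∫ y in ball x r, f y ∂ν)
        (nhdsWithin 0 (Ioi 0)) (nhds (f x)))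
    (u : X → ℝ) (uk : ℕ → X → ℝ)
    (hu_meas : Measurable u) (huk_meas : ∀ k, Measurable (uk k))
    -- the functions belong to `L^∞(X;ν)`
    (hu_bdd : ∃ C : ℝ, ∀ᵐ x ∂ν, |u x| ≤ C)
    (huk_bdd : ∀ k, ∃ C : ℝ, ∀ᵐ x ∂ν, |uk k x| ≤ C)
    -- weak-* convergence `uk ⇀* u` in `L^∞(X;ν)`
    (hweak : ∀ φ : X → ℝ, Integrable φ ν →
      Tendsto (fun k => ∫ x, uk k x * φ x ∂ν) atTop (nhds (∫ x, u x * φ x ∂ν))) :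
    ∀ᵐ x ∂ν, ∀ ε : ℝ, 0 < ε →
      limsup (fun k => essInf (uk k) (ν.restrict (ball x ε))) atTop ≤ u x ∧
      u x ≤ liminf (fun k => essSup (uk k) (ν.restrict (ball x ε))) atTop := by
  have hmemLp {f : X → ℝ} (hf : Measurable f) (hbdd : ∃ C : ℝ, ∀ᵐ x ∂ν, |f x| ≤ C) :
      MemLp f ∞ ν :=
    let ⟨C, hC⟩ := hbdd
    memLp_top_of_bound hf.aestronglyMeasurable C (by simpa only [Real.norm_eq_abs] using hC)
  obtain ⟨C, hC⟩ := exists_ae_abs_le_of_forall_bounded_integral_mul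
    (fun k => hmemLp (huk_meas k) (huk_bdd k)) fun φ hφ =>
      let ⟨C, hC⟩ := (hweak φ hφ).abs.bddAbove_range
      ⟨C, fun k => hC (mem_range_self k)⟩
  have hLDP' (f : X → ℝ) (hf : Integrable f ν) : ∀ᵐ x ∂ν,
      Tendsto (fun r => ⨍ y in ball x r, f y ∂ν) (𝓝[>] 0) (𝓝 (f x)) := by
    simpa only [setAverage_eq, measureReal_def, smul_eq_mul] using hLDP f hf
  filter_upwards [hLDP' _ (integrable_const 1),
    hLDP' u ((hmemLp hu_meas hu_bdd).integrable le_top)] with x hx_one hx_u ε hε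
  have hsmall : ∀ᶠ δ in 𝓝[>] 0, δ ∈ Ioc 0 ε := Ioc_mem_nhdsGT hε
  have hball_avg (δ : ℝ) := tendsto_setAverage_of_tendsto_integral_mul (f := uk) (μ := ν)
    measurableSet_ball (measure_ne_top ν (ball x δ)) hweak
  have hint (k : ℕ) (δ : ℝ) : IntegrableOn (uk k) (ball x δ) ν :=
    ((hmemLp (huk_meas k) (huk_bdd k)).integrable le_top).integrableOn
  have hball_pos {δ : ℝ} (hδ : 0 < δ) :=
    measure_ball_ne_zero_of_tendsto_setAverage_one hx_one hδ
  refine ⟨ge_of_tendsto hx_u (hsmall.mono fun δ hδ => ?_),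
    le_of_tendsto hx_u (hsmall.mono fun δ hδ => ?_)⟩
  · exact limsup_essInf_le_of_tendsto_setAverage (ball_subset_ball hδ.2) (hball_pos hδ.1)
      (measure_ne_top ν _) (fun k => hint k δ) (fun k => ae_restrict_of_ae (hC k))
      (hball_avg δ)
  · exact le_liminf_essSup_of_tendsto_setAverage (ball_subset_ball hδ.2) (hball_pos hδ.1)
      (measure_ne_top ν _) (fun k => hint k δ) (fun k => ae_restrict_of_ae (hC k))
      (hball_avg δ)
end

section
/- Coarea formula for the nonlocal essential total variation: for ν-essentially bounded measurable u : X → ℝ, TV_ε(u) = ∫_ℝ Per_ε({u ≥ t}) dt, where TV_ε(u) := (w₀/ε)∫(esssup_{ν,B_ε(·)} u − u)dρ₀ + (w₁/ε)∫(u − essinf_{ν,B_ε(·)} u)dρ₁ and Per_ε(A) := TV_ε(1_A). -/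
open Set Metric MeasureTheory

/-- The nonlocal essential total variation
`TV_ε(u) = (w₀/ε)∫(esssup_{ν,B_ε(·)} u − u)dρ₀ + (w₁/ε)∫(u − essinf_{ν,B_ε(·)} u)dρ₁`. -/
noncomputable def nonlocalTV {X : Type*} [PseudoMetricSpace X] [MeasurableSpace X]
    (ν ρ₀ ρ₁ : Measure X) (w₀ w₁ ε : ℝ) (u : X → ℝ) : ℝ :=
  (w₀ / ε) * ∫ x, (essSup u (ν.restrict (ball x ε)) - u x) ∂ρ₀ +
  (w₁ / ε) * ∫ x, (u x - essInf u (ν.restrict (ball x ε))) ∂ρ₁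

/-- The associated nonlocal perimeter `Per_ε(A) := TV_ε(1_A)`. -/
noncomputable def nonlocalPer {X : Type*} [PseudoMetricSpace X] [MeasurableSpace X]
    (ν ρ₀ ρ₁ : Measure X) (w₀ w₁ ε : ℝ) (A : Set X) : ℝ :=
  nonlocalTV ν ρ₀ ρ₁ w₀ w₁ ε (A.indicator fun _ => (1 : ℝ))

/-!
Write `μₓ` for `ν` restricted to `B_ε(x)`. In a separable space `ν`-a.e. point lies in the
support of `ν`, so `μₓ ≠ 0` for `ν`-a.e. `x`. For such `x` and every level `t` except
`M(x) = esssup_{μₓ} u`, the essential supremum of `1_{u ≥ t}` over `μₓ` is `1_{t < M(x)}`,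
so the integrand of `Per_ε({u ≥ t})` at `x` is the step `1_{t < M(x)} - 1_{t ≤ u(x)}`, whose
integral over `t` is `M(x) - u(x)`; symmetrically with `essinf`. Boundedness of `u` confines
these steps to `[-C, C]`, so the integrand is integrable on `ℝ × X` and Fubini exchanges the
integrals. Joint measurability in `(t, x)` holds because `x ↦ μₓ` is a kernel and the essential
supremum of an indicator only depends on whether the set is `μₓ`-null.
-/

open Filter Function ProbabilityTheory

section EssSupIndicator

variable {α : Type*} [MeasurableSpace α] {μ : Measure α}

lemma essSup_zero_measure_real (f : α → ℝ) : essSup f (0 : Measure α) = 0 := by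
  simp [essSup, limsup_eq]

lemma essInf_zero_measure_real (f : α → ℝ) : essInf f (0 : Measure α) = 0 := by
  simp [essInf, liminf_eq]

lemma measure_ne_zero_of_measure_compl_eq_zero (hμ : μ ≠ 0) {s : Set α} (hs : μ sᶜ = 0) :
    μ s ≠ 0 :=
  have : (ae μ).NeBot := ae_neBot.2 hμ
  frequently_ae_mem_iff.1 (Eventually.frequently (mem_ae_iff.2 hs))

lemma essSup_indicator_one (s : Set α) :
    essSup (s.indicator fun _ => (1 : ℝ)) μ = if μ s = 0 then 0 else 1 := by
  rcases eq_or_ne μ 0 with rfl | hμ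
  · simp [essSup_zero_measure_real]
  have : (ae μ).NeBot := ae_neBot.2 hμ
  have hle : ∀ x, s.indicator (fun _ => (1 : ℝ)) x ≤ 1 := indicator_le_self' fun _ _ => zero_le_one
  split_ifs with hs
  · have h0 : s.indicator (fun _ => (1 : ℝ)) =ᵐ[μ] fun _ => 0 :=
      indicator_ae_eq_zero.2 (measure_mono_null inter_subset_left hs)
    exact (essSup_congr_ae h0).trans (essSup_const 0 hμ)
  refine le_antisymm (essSup_le_of_ae_le 1 (.of_forall hle)
    (isCoboundedUnder_le_of_le _ (x := 0) (indicator_nonneg fun _ _ => zero_le_one)))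
    (not_lt.1 fun hlt => hs ?_)
  refine measure_eq_zero_iff_ae_notMem.2
    ((ae_lt_of_essSup_lt hlt (isBoundedUnder_of_eventually_le (.of_forall hle))).mono
      fun x hx hxs => ?_)
  simp [hxs] at hx

lemma essInf_indicator_one (s : Set α) :
    essInf (s.indicator fun _ => (1 : ℝ)) μ = if μ s ≠ 0 ∧ μ sᶜ = 0 then 1 else 0 := by
  rcases eq_or_ne μ 0 with rfl | hμ
  · simp [essInf_zero_measure_real]
  have : (ae μ).NeBot := ae_neBot.2 hμ
  have hnn : ∀ x, 0 ≤ s.indicator (fun _ => (1 : ℝ)) x := indicator_nonneg fun _ _ => zero_le_one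
  split_ifs with hs
  · refine (essInf_congr_ae (f := s.indicator fun _ => (1 : ℝ)) (g := fun _ => 1) ?_).trans
      (essInf_const 1 hμ)
    filter_upwards [measure_eq_zero_iff_ae_notMem.1 hs.2] with x hx
    simp_all
  have hc : μ sᶜ ≠ 0 := fun hc => hs ⟨measure_ne_zero_of_measure_compl_eq_zero hμ hc, hc⟩
  refine le_antisymm (not_lt.1 fun hlt => hc ?_) (le_essInf_of_ae_le 0 (.of_forall hnn)
    (isCoboundedUnder_ge_of_le _ (x := 1) (indicator_le_self' fun _ _ => zero_le_one)))
  refine measure_eq_zero_iff_ae_notMem.2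
    ((ae_lt_of_lt_essInf hlt (isBoundedUnder_of_eventually_ge (.of_forall hnn))).mono
      fun x hx hxs => ?_)
  simp [indicator_of_notMem hxs] at hx

lemma essSup_indicator_one_mem_Icc (s : Set α) :
    essSup (s.indicator fun _ => (1 : ℝ)) μ ∈ Icc 0 1 := by
  rw [essSup_indicator_one]; split_ifs <;> simp

lemma essInf_indicator_one_mem_Icc (s : Set α) :
    essInf (s.indicator fun _ => (1 : ℝ)) μ ∈ Icc 0 1 := by
  rw [essInf_indicator_one]; split_ifs <;> simp

end EssSupIndicator

section LevelSets

variable {α : Type*} [MeasurableSpace α] {μ : Measure α} {u : α → ℝ} {C t : ℝ}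

lemma measure_le_eq_zero_of_essSup_lt (hu : IsBoundedUnder (· ≤ ·) (ae μ) u)
    (ht : essSup u μ < t) : μ {y | t ≤ u y} = 0 :=
  measure_eq_zero_iff_ae_notMem.2 ((ae_lt_of_essSup_lt ht hu).mono fun _ hy => not_le.2 hy)

lemma measure_le_ne_zero_of_lt_essSup (hμ : μ ≠ 0) (hu : IsBoundedUnder (· ≥ ·) (ae μ) u)
    (ht : t < essSup u μ) : μ {y | t ≤ u y} ≠ 0 := by
  have : (ae μ).NeBot := ae_neBot.2 hμ
  refine fun h => ht.not_ge (essSup_le_of_ae_le t ?_ hu.isCoboundedUnder_le)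
  filter_upwards [measure_eq_zero_iff_ae_notMem.1 h] with y hy using (not_le.1 hy).le

lemma measure_lt_eq_zero_of_lt_essInf (hu : IsBoundedUnder (· ≥ ·) (ae μ) u)
    (ht : t < essInf u μ) : μ {y | u y < t} = 0 :=
  measure_eq_zero_iff_ae_notMem.2 ((ae_lt_of_lt_essInf ht hu).mono fun _ hy => not_lt.2 hy.le)

lemma measure_lt_ne_zero_of_essInf_lt (hμ : μ ≠ 0) (hu : IsBoundedUnder (· ≤ ·) (ae μ) u)
    (ht : essInf u μ < t) : μ {y | u y < t} ≠ 0 := by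
  have : (ae μ).NeBot := ae_neBot.2 hμ
  refine fun h => ht.not_ge (le_essInf_of_ae_le t ?_ hu.isCoboundedUnder_ge)
  filter_upwards [measure_eq_zero_iff_ae_notMem.1 h] with y hy using not_lt.1 hy

lemma abs_essSup_le (hμ : μ ≠ 0) (hC : ∀ᵐ y ∂μ, |u y| ≤ C) : |essSup u μ| ≤ C := by
  have : (ae μ).NeBot := ae_neBot.2 hμ
  have hle : ∀ᵐ y ∂μ, u y ≤ C := hC.mono fun _ hy => (abs_le.1 hy).2
  have hge : ∀ᵐ y ∂μ, -C ≤ u y := hC.mono fun _ hy => (abs_le.1 hy).1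
  obtain ⟨y, hy, hyM⟩ := (hge.and (ae_le_essSup (isBoundedUnder_of_eventually_le hle))).exists
  exact abs_le.2 ⟨hy.trans hyM,
    essSup_le_of_ae_le C hle (isBoundedUnder_of_eventually_ge hge).isCoboundedUnder_le⟩

lemma abs_essInf_le (hμ : μ ≠ 0) (hC : ∀ᵐ y ∂μ, |u y| ≤ C) : |essInf u μ| ≤ C := by
  have : (ae μ).NeBot := ae_neBot.2 hμ
  have hle : ∀ᵐ y ∂μ, u y ≤ C := hC.mono fun _ hy => (abs_le.1 hy).2
  have hge : ∀ᵐ y ∂μ, -C ≤ u y := hC.mono fun _ hy => (abs_le.1 hy).1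
  obtain ⟨y, hy, hym⟩ := (hle.and (ae_essInf_le (isBoundedUnder_of_eventually_ge hge))).exists
  exact abs_le.2
    ⟨le_essInf_of_ae_le (-C) hge (isBoundedUnder_of_eventually_le hle).isCoboundedUnder_ge,
      hym.trans hy⟩

lemma essSup_indicator_setOf_le (hμ : μ ≠ 0) (hC : ∀ᵐ y ∂μ, |u y| ≤ C)
    (ht : t ≠ essSup u μ) :
    essSup ({y | t ≤ u y}.indicator fun _ => (1 : ℝ)) μ =
      (Iio (essSup u μ)).indicator (fun _ => 1) t := by
  rw [essSup_indicator_one]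
  rcases ht.lt_or_gt with ht | ht
  · simp [measure_le_ne_zero_of_lt_essSup hμ
      (isBoundedUnder_of_eventually_ge (hC.mono fun _ hy => (abs_le.1 hy).1)) ht, ht]
  · simp [measure_le_eq_zero_of_essSup_lt
      (isBoundedUnder_of_eventually_le (hC.mono fun _ hy => (abs_le.1 hy).2)) ht, ht.not_gt]

lemma essInf_indicator_setOf_le (hμ : μ ≠ 0) (hC : ∀ᵐ y ∂μ, |u y| ≤ C)
    (ht : t ≠ essInf u μ) :
    essInf ({y | t ≤ u y}.indicator fun _ => (1 : ℝ)) μ =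
      (Iio (essInf u μ)).indicator (fun _ => 1) t := by
  have hcompl : {y | t ≤ u y}ᶜ = {y | u y < t} := by ext; simp
  rw [essInf_indicator_one, hcompl]
  rcases ht.lt_or_gt with ht | ht
  · have h0 := measure_lt_eq_zero_of_lt_essInf
      (isBoundedUnder_of_eventually_ge (hC.mono fun _ hy => (abs_le.1 hy).1)) ht
    have hpos := measure_ne_zero_of_measure_compl_eq_zero hμ (s := {y | t ≤ u y}) (hcompl ▸ h0)
    simp [h0, hpos, ht]
  · simp [measure_lt_ne_zero_of_essInf_lt hμ
      (isBoundedUnder_of_eventually_le (hC.mono fun _ hy => (abs_le.1 hy).2)) ht, ht.not_gt]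

end LevelSets

section LayerCake

lemma integral_indicator_Iio_sub_indicator_Iic (a b : ℝ) :
    ∫ t, ((Iio b).indicator (fun _ => (1 : ℝ)) t - (Iic a).indicator (fun _ => 1) t) = b - a := by
  -- neither indicator is integrable on its own: cut both at a common point `c` below `a` and `b`
  set c := min a b - 1
  have hc : ∀ t, (Iio b).indicator (fun _ => (1 : ℝ)) t - (Iic a).indicator (fun _ => 1) t =
      (Ioo c b).indicator (fun _ => 1) t - (Ioc c a).indicator (fun _ => 1) t := by
    intro t
    by_cases ht : c < t
    · simp [indicator_apply, ht]
    · have : t < b ∧ t ≤ a := by constructor <;> linarith [min_le_left a b, min_le_right a b]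
      simp [ht, this]
  simp_rw [hc]
  rw [integral_sub
    ((integrableOn_const measure_Ioo_lt_top.ne).integrable_indicator measurableSet_Ioo)
    ((integrableOn_const measure_Ioc_lt_top.ne).integrable_indicator measurableSet_Ioc),
    integral_indicator_const _ measurableSet_Ioo, integral_indicator_const _ measurableSet_Ioc,
    Real.volume_real_Ioo_of_le (by linarith [min_le_right a b]),
    Real.volume_real_Ioc_of_le (by linarith [min_le_left a b])]
  simp

lemma abs_sub_indicator_Iic_le {e a b C t : ℝ} (he : e ∈ Icc 0 1) (ha : |a| ≤ C) (hb : |b| ≤ C)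
    (hstep : t ≠ b → e = (Iio b).indicator (fun _ => 1) t) :
    |e - (Iic a).indicator (fun _ => 1) t| ≤ (Icc (-C) C).indicator (fun _ => 1) t := by
  obtain ⟨ha₁, ha₂⟩ := abs_le.1 ha
  obtain ⟨hb₁, hb₂⟩ := abs_le.1 hb
  by_cases ht : t ∈ Icc (-C) C
  · rw [indicator_of_mem ht, abs_le]
    by_cases hta : t ≤ a <;> simp [hta] <;> constructor <;> linarith [he.1, he.2]
  · rw [indicator_of_notMem ht]
    rw [mem_Icc, not_and_or, not_le, not_le] at ht
    rcases ht with ht | ht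
    · rw [hstep (by linarith)]; simp [show t < b by linarith, show t ≤ a by linarith]
    · rw [hstep (by linarith)]; simp [show ¬ t < b by linarith, show ¬ t ≤ a by linarith]

lemma indicator_setOf_le_eq_indicator_Iic {X : Type*} (u : X → ℝ) (t : ℝ) (x : X) :
    {y | t ≤ u y}.indicator (fun _ => (1 : ℝ)) x = (Iic (u x)).indicator (fun _ => 1) t := by
  simp [indicator_apply]

variable {X : Type*} [MeasurableSpace X] {ρ : Measure X} [IsFiniteMeasure ρ] {u b : X → ℝ}
  {E : ℝ → X → ℝ} {C : ℝ}

lemma integrable_uncurry_sub_indicator_setOf_le (hu : Measurable u) (hE : Measurable (uncurry E))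
    (hE01 : ∀ t x, E t x ∈ Icc 0 1)
    (hstep : ∀ᵐ x ∂ρ, |u x| ≤ C ∧ |b x| ≤ C ∧
      ∀ t ≠ b x, E t x = (Iio (b x)).indicator (fun _ => 1) t) :
    Integrable (uncurry fun t x => E t x - {y | t ≤ u y}.indicator (fun _ => (1 : ℝ)) x)
      (volume.prod ρ) := by
  have hlevel : Measurable fun p : ℝ × X => {y | p.1 ≤ u y}.indicator (fun _ => (1 : ℝ)) p.2 :=
    measurable_const.indicator (measurableSet_le measurable_fst (hu.comp measurable_snd))
  have hdom : Integrable (fun p : ℝ × X => (Icc (-C) C).indicator (fun _ => (1 : ℝ)) p.1)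
      (volume.prod ρ) := by
    simpa using ((integrableOn_const measure_Icc_lt_top.ne).integrable_indicator
      measurableSet_Icc).mul_prod (integrable_const (1 : ℝ) (μ := ρ))
  refine hdom.mono' (hE.sub hlevel).aestronglyMeasurable
    ((Measure.quasiMeasurePreserving_snd.ae hstep).mono fun p hp => ?_)
  simp only [Real.norm_eq_abs, uncurry_def, indicator_setOf_le_eq_indicator_Iic]
  exact abs_sub_indicator_Iic_le (hE01 _ _) hp.1 hp.2.1 (hp.2.2 p.1)

lemma integral_integral_sub_indicator_setOf_le (hu : Measurable u) (hE : Measurable (uncurry E))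
    (hE01 : ∀ t x, E t x ∈ Icc 0 1)
    (hstep : ∀ᵐ x ∂ρ, |u x| ≤ C ∧ |b x| ≤ C ∧
      ∀ t ≠ b x, E t x = (Iio (b x)).indicator (fun _ => 1) t) :
    ∫ t, ∫ x, (E t x - {y | t ≤ u y}.indicator (fun _ => (1 : ℝ)) x) ∂ρ =
      ∫ x, (b x - u x) ∂ρ := by
  rw [integral_integral_swap (integrable_uncurry_sub_indicator_setOf_le hu hE hE01 hstep)]
  refine integral_congr_ae (hstep.mono fun x hx => ?_)
  dsimp only
  rw [← integral_indicator_Iio_sub_indicator_Iic]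
  refine integral_congr_ae ((Measure.ae_ne volume (b x)).mono fun t ht => ?_)
  simp only [hx.2.2 t ht, indicator_setOf_le_eq_indicator_Iic]

end LayerCake

section Kernel

variable {X : Type*} [MeasurableSpace X] {κ : Kernel X X} {u : X → ℝ} {ρ : Measure X} {C : ℝ}

lemma ae_essSup_indicator_setOf_le (hκ : ∀ᵐ x ∂ρ, κ x ≠ 0)
    (hC : ∀ᵐ x ∂ρ, |u x| ≤ C ∧ ∀ᵐ y ∂κ x, |u y| ≤ C) :
    ∀ᵐ x ∂ρ, |u x| ≤ C ∧ |essSup u (κ x)| ≤ C ∧ ∀ t ≠ essSup u (κ x),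
      essSup ({y | t ≤ u y}.indicator fun _ => (1 : ℝ)) (κ x) =
        (Iio (essSup u (κ x))).indicator (fun _ => 1) t :=
  (hκ.and hC).mono fun _ hx =>
    ⟨hx.2.1, abs_essSup_le hx.1 hx.2.2, fun _ ht => essSup_indicator_setOf_le hx.1 hx.2.2 ht⟩

lemma ae_essInf_indicator_setOf_le (hκ : ∀ᵐ x ∂ρ, κ x ≠ 0)
    (hC : ∀ᵐ x ∂ρ, |u x| ≤ C ∧ ∀ᵐ y ∂κ x, |u y| ≤ C) :
    ∀ᵐ x ∂ρ, |u x| ≤ C ∧ |essInf u (κ x)| ≤ C ∧ ∀ t ≠ essInf u (κ x),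
      essInf ({y | t ≤ u y}.indicator fun _ => (1 : ℝ)) (κ x) =
        (Iio (essInf u (κ x))).indicator (fun _ => 1) t :=
  (hκ.and hC).mono fun _ hx =>
    ⟨hx.2.1, abs_essInf_le hx.1 hx.2.2, fun _ ht => essInf_indicator_setOf_le hx.1 hx.2.2 ht⟩

variable [IsSFiniteKernel κ]

lemma measurable_kernel_setOf_mem {β : Type*} [MeasurableSpace β] {S : Set (β × X)}
    (hS : MeasurableSet S) : Measurable fun p : β × X => κ p.2 {y | (p.1, y) ∈ S} :=
  Kernel.measurable_kernel_prodMk_left (κ := κ.prodMkLeft β)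
    ((measurable_fst.fst.prodMk measurable_snd) hS)

lemma measurable_essSup_indicator_setOf_le (hu : Measurable u) :
    Measurable (uncurry fun t x => essSup ({y | t ≤ u y}.indicator fun _ => (1 : ℝ)) (κ x)) := by
  simp only [uncurry_def, essSup_indicator_one]
  exact Measurable.ite (measurable_kernel_setOf_mem (κ := κ)
    (measurableSet_le measurable_fst (hu.comp measurable_snd)) (measurableSet_singleton 0))
    measurable_const measurable_const

lemma measurable_essInf_indicator_setOf_le (hu : Measurable u) :
    Measurable (uncurry fun t x => essInf ({y | t ≤ u y}.indicator fun _ => (1 : ℝ)) (κ x)) := by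
  simp only [uncurry_def, essInf_indicator_one]
  have hS : MeasurableSet {q : ℝ × X | q.1 ≤ u q.2} :=
    measurableSet_le measurable_fst (hu.comp measurable_snd)
  exact Measurable.ite
    (((measurable_kernel_setOf_mem (κ := κ) hS) (measurableSet_singleton 0)).compl.inter
      ((measurable_kernel_setOf_mem (κ := κ) hS.compl) (measurableSet_singleton 0)))
    measurable_const measurable_const

variable [IsFiniteMeasure ρ]

lemma integrable_integral_essSup_indicator_sub (hu : Measurable u) (hκ : ∀ᵐ x ∂ρ, κ x ≠ 0)
    (hC : ∀ᵐ x ∂ρ, |u x| ≤ C ∧ ∀ᵐ y ∂κ x, |u y| ≤ C) :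
    Integrable fun t => ∫ x, (essSup ({y | t ≤ u y}.indicator fun _ => (1 : ℝ)) (κ x) -
      {y | t ≤ u y}.indicator (fun _ => 1) x) ∂ρ :=
  (integrable_uncurry_sub_indicator_setOf_le hu (measurable_essSup_indicator_setOf_le hu)
    (fun _ _ => essSup_indicator_one_mem_Icc _)
    (ae_essSup_indicator_setOf_le hκ hC)).integral_prod_left

lemma integral_integral_essSup_indicator_sub (hu : Measurable u) (hκ : ∀ᵐ x ∂ρ, κ x ≠ 0)
    (hC : ∀ᵐ x ∂ρ, |u x| ≤ C ∧ ∀ᵐ y ∂κ x, |u y| ≤ C) :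
    ∫ t, ∫ x, (essSup ({y | t ≤ u y}.indicator fun _ => (1 : ℝ)) (κ x) -
      {y | t ≤ u y}.indicator (fun _ => 1) x) ∂ρ = ∫ x, (essSup u (κ x) - u x) ∂ρ :=
  integral_integral_sub_indicator_setOf_le hu (measurable_essSup_indicator_setOf_le hu)
    (fun _ _ => essSup_indicator_one_mem_Icc _) (ae_essSup_indicator_setOf_le hκ hC)

lemma integrable_integral_indicator_sub_essInf (hu : Measurable u) (hκ : ∀ᵐ x ∂ρ, κ x ≠ 0)
    (hC : ∀ᵐ x ∂ρ, |u x| ≤ C ∧ ∀ᵐ y ∂κ x, |u y| ≤ C) :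
    Integrable fun t => ∫ x, ({y | t ≤ u y}.indicator (fun _ => (1 : ℝ)) x -
      essInf ({y | t ≤ u y}.indicator fun _ => 1) (κ x)) ∂ρ := by
  refine ((integrable_uncurry_sub_indicator_setOf_le hu (measurable_essInf_indicator_setOf_le hu)
    (fun _ _ => essInf_indicator_one_mem_Icc _)
    (ae_essInf_indicator_setOf_le hκ hC)).integral_prod_left.neg).congr (.of_forall fun t => ?_)
  simp only [Pi.neg_apply, uncurry_apply_pair, ← integral_neg, neg_sub]

lemma integral_integral_indicator_sub_essInf (hu : Measurable u) (hκ : ∀ᵐ x ∂ρ, κ x ≠ 0)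
    (hC : ∀ᵐ x ∂ρ, |u x| ≤ C ∧ ∀ᵐ y ∂κ x, |u y| ≤ C) :
    ∫ t, ∫ x, ({y | t ≤ u y}.indicator (fun _ => (1 : ℝ)) x -
      essInf ({y | t ≤ u y}.indicator fun _ => 1) (κ x)) ∂ρ = ∫ x, (u x - essInf u (κ x)) ∂ρ := by
  have h := integral_integral_sub_indicator_setOf_le hu (measurable_essInf_indicator_setOf_le hu)
    (fun _ _ => essInf_indicator_one_mem_Icc _) (ae_essInf_indicator_setOf_le hκ hC)
  rw [← neg_inj, ← integral_neg, ← integral_neg] at h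
  simpa only [← integral_neg, neg_sub] using h

end Kernel

section BallKernel

variable {X : Type*} [PseudoMetricSpace X] [SecondCountableTopology X] [MeasurableSpace X]
  [OpensMeasurableSpace X]

noncomputable def ballKernel (ν : Measure X) [SFinite ν] (ε : ℝ) : Kernel X X where
  toFun x := ν.restrict (ball x ε)
  measurable' := Measure.measurable_of_measurable_coe _ fun s hs => by
    simp only [Measure.restrict_apply hs]
    exact measurable_measure_prodMk_left ((measurable_snd hs).inter
      (measurableSet_lt (measurable_snd.dist measurable_fst) measurable_const))

@[simp]
lemma ballKernel_apply (ν : Measure X) [SFinite ν] (ε : ℝ) (x : X) :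
    ballKernel ν ε x = ν.restrict (ball x ε) :=
  rfl

instance (ν : Measure X) [IsFiniteMeasure ν] (ε : ℝ) : IsFiniteKernel (ballKernel ν ε) :=
  ⟨⟨ν univ, measure_lt_top ν univ, fun x => by
    simpa using measure_mono (μ := ν) (subset_univ (ball x ε))⟩⟩

lemma ae_ballKernel_ne_zero (ν : Measure X) [SFinite ν] {ε : ℝ} (hε : 0 < ε) :
    ∀ᵐ x ∂ν, ballKernel ν ε x ≠ 0 := by
  filter_upwards [ν.support_mem_ae] with x hx
  rw [ballKernel_apply, Ne, Measure.restrict_eq_zero]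
  exact ((ν.mem_support_iff_forall x).1 hx _ (ball_mem_nhds x hε)).ne'

end BallKernel

theorem nonlocalTV_coarea_general {X : Type*} [MetricSpace X] [MeasurableSpace X] [BorelSpace X]
    [TopologicalSpace.SeparableSpace X]
    (ν ρ₀ ρ₁ : Measure X) [IsFiniteMeasure ν]
    [IsProbabilityMeasure ρ₀] [IsProbabilityMeasure ρ₁]
    (hac₀ : ρ₀ ≪ ν) (hac₁ : ρ₁ ≪ ν)
    (w₀ w₁ : ℝ)
    (ε : ℝ) (hε : 0 < ε)
    (u : X → ℝ) (hu_meas : Measurable u)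
    -- `u` is `ν`-essentially bounded
    (hu_bdd : ∃ C : ℝ, ∀ᵐ x ∂ν, |u x| ≤ C) :
    nonlocalTV ν ρ₀ ρ₁ w₀ w₁ ε u =
      ∫ t : ℝ, nonlocalPer ν ρ₀ ρ₁ w₀ w₁ ε {x | t ≤ u x} := by
  obtain ⟨C, hC⟩ := hu_bdd
  have hκ := ae_ballKernel_ne_zero ν hε
  have hCκ : ∀ᵐ x ∂ν, |u x| ≤ C ∧ ∀ᵐ y ∂ballKernel ν ε x, |u y| ≤ C :=
    hC.mono fun _ hx => ⟨hx, ae_restrict_of_ae hC⟩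
  have hint₀ := integrable_integral_essSup_indicator_sub hu_meas (hac₀.ae_le hκ) (hac₀.ae_le hCκ)
  have hint₁ := integrable_integral_indicator_sub_essInf hu_meas (hac₁.ae_le hκ) (hac₁.ae_le hCκ)
  have h₀ := integral_integral_essSup_indicator_sub hu_meas (hac₀.ae_le hκ) (hac₀.ae_le hCκ)
  have h₁ := integral_integral_indicator_sub_essInf hu_meas (hac₁.ae_le hκ) (hac₁.ae_le hCκ)
  simp only [ballKernel_apply] at hint₀ hint₁ h₀ h₁
  simp only [nonlocalPer, nonlocalTV]
  rw [integral_add (hint₀.const_mul _) (hint₁.const_mul _), integral_const_mul, integral_const_mul,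
    h₀, h₁]

theorem nonlocalTV_coarea {X : Type*} [MetricSpace X] [MeasurableSpace X] [BorelSpace X]
    [TopologicalSpace.SeparableSpace X]
    (ν ρ₀ ρ₁ : Measure X) [IsFiniteMeasure ν]
    [IsProbabilityMeasure ρ₀] [IsProbabilityMeasure ρ₁]
    (hac₀ : ρ₀ ≪ ν) (hac₁ : ρ₁ ≪ ν)
    (w₀ w₁ : ℝ) (hw₀ : 0 ≤ w₀) (hw₁ : 0 ≤ w₁)
    (ε : ℝ) (hε : 0 < ε)
    (u : X → ℝ) (hu_meas : Measurable u)
    -- `u` is `ν`-essentially bounded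
    (hu_bdd : ∃ C : ℝ, ∀ᵐ x ∂ν, |u x| ≤ C) :
    nonlocalTV ν ρ₀ ρ₁ w₀ w₁ ε u =
      ∫ t : ℝ, nonlocalPer ν ρ₀ ρ₁ w₀ w₁ ε {x | t ≤ u x} :=
  nonlocalTV_coarea_general ν ρ₀ ρ₁ hac₀ hac₁ w₀ w₁ ε hε u hu_meas hu_bdd
end
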